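/- For every μ > 0 and every z ∈ ℂ with Re z > 0, the regularized Gamma function converges to a multiple of the Gamma function as t → ∞: lim_{t→∞} Γ_{μ,t}(z) = μ^{−z} Γ(z), where μ^{−z} = e^{−z log μ} with the real logarithm of μ and Γ is the complex Gamma function. -/

import Mathlib

/-!
Substituting `s = μ eˣ` turns `∫ e^{-μeˣ} e^{zx} dx` into `μ^{-z} ∫₀^∞ e^{-s} s^{z-1} ds`, that is
`μ^{-z} Γ(z)`. The Gaussian factor `e^{-x²/(2t)}` has modulus at most `1` and tends to `1` pointwise
as `t → ∞`, so dominated convergence, with the integrable majorant `|e^{-μeˣ} e^{zx}|`, gives the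
limit.
-/

open MeasureTheory Complex Real Filter

/-- The regularized Gamma function `Γ_{μ,t}(z) = ∫_ℝ e^{-μe^x} e^{zx} e^{-x²/(2t)} dx`. -/
noncomputable def regGamma (μ t : ℝ) (z : ℂ) : ℂ :=
  ∫ x : ℝ, Complex.exp ((-(μ * Real.exp x) : ℝ) : ℂ) * Complex.exp (z * (x : ℂ)) *
    Complex.exp ((-(x ^ 2 / (2 * t)) : ℝ) : ℂ)

open scoped Topology

section ExpSubstitution

variable {E : Type*} [NormedAddCommGroup E] [NormedSpace ℝ E]

theorem integral_comp_exp (g : ℝ → E) :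
    ∫ x, Real.exp x • g (Real.exp x) = ∫ y in Set.Ioi 0, g y := by
  symm
  rw [← Real.range_exp, ← Set.image_univ]
  simpa [abs_of_pos (Real.exp_pos _)] using integral_image_eq_integral_abs_deriv_smul
    MeasurableSet.univ (fun x _ ↦ (Real.hasDerivAt_exp x).hasDerivWithinAt)
    Real.exp_injective.injOn g

theorem integrable_comp_exp_iff (g : ℝ → E) :
    Integrable (fun x ↦ Real.exp x • g (Real.exp x)) ↔ IntegrableOn g (Set.Ioi 0) := by
  symm
  rw [← Real.range_exp, ← Set.image_univ]
  simpa [abs_of_pos (Real.exp_pos _)] using integrableOn_image_iff_integrableOn_abs_deriv_smul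
    MeasurableSet.univ (fun x _ ↦ (Real.hasDerivAt_exp x).hasDerivWithinAt)
    Real.exp_injective.injOn g

end ExpSubstitution

theorem Complex.ofReal_exp_cpow (x : ℝ) (w : ℂ) : (Real.exp x : ℂ) ^ w = cexp (x * w) := by
  rw [Complex.ofReal_exp, cpow_def_of_ne_zero (Complex.exp_ne_zero _),
    Complex.log_exp (by simpa using Real.pi_pos) (by simpa using Real.pi_nonneg)]

theorem exp_smul_gammaIntegrand_comp_exp (z : ℂ) (x : ℝ) :
    Real.exp x • ((Real.exp (-Real.exp x) : ℂ) * (Real.exp x : ℂ) ^ (z - 1))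
      = cexp (-(Real.exp x) : ℝ) * cexp (z * x) := by
  rw [Complex.ofReal_exp_cpow, real_smul, Complex.ofReal_exp, Complex.ofReal_exp,
    mul_left_comm, ← Complex.exp_add]
  congr 2
  ring

theorem integrable_cexp_neg_exp_mul_cexp {z : ℂ} (hz : 0 < z.re) :
    Integrable fun x : ℝ ↦ cexp (-(Real.exp x) : ℝ) * cexp (z * x) := by
  simpa only [exp_smul_gammaIntegrand_comp_exp] using
    (integrable_comp_exp_iff _).mpr (Complex.GammaIntegral_convergent hz)

theorem integral_cexp_neg_exp_mul_cexp {z : ℂ} (hz : 0 < z.re) :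
    ∫ x : ℝ, cexp (-(Real.exp x) : ℝ) * cexp (z * x) = Complex.Gamma z := by
  simp only [← exp_smul_gammaIntegrand_comp_exp]
  rw [integral_comp_exp (fun y : ℝ ↦ (Real.exp (-y) : ℂ) * (y : ℂ) ^ (z - 1)),
    Complex.Gamma_eq_integral hz, Complex.GammaIntegral]

theorem cexp_neg_mul_exp_mul_cexp_eq {μ : ℝ} (hμ : 0 < μ) (z : ℂ) (x : ℝ) :
    cexp (-(μ * Real.exp x) : ℝ) * cexp (z * x) = cexp (-z * Real.log μ) *
      (cexp (-(Real.exp (x + Real.log μ)) : ℝ) * cexp (z * ↑(x + Real.log μ))) := by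
  rw [Real.exp_add, Real.exp_log hμ, ← Complex.exp_add, ← Complex.exp_add, ← Complex.exp_add]
  congr 1
  push_cast
  ring

theorem integrable_cexp_neg_mul_exp_mul_cexp {μ : ℝ} (hμ : 0 < μ) {z : ℂ} (hz : 0 < z.re) :
    Integrable fun x : ℝ ↦ cexp (-(μ * Real.exp x) : ℝ) * cexp (z * x) := by
  simpa only [cexp_neg_mul_exp_mul_cexp_eq hμ] using
    ((integrable_cexp_neg_exp_mul_cexp hz).comp_add_right (Real.log μ)).const_mul _

theorem integral_cexp_neg_mul_exp_mul_cexp {μ : ℝ} (hμ : 0 < μ) {z : ℂ} (hz : 0 < z.re) :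
    ∫ x : ℝ, cexp (-(μ * Real.exp x) : ℝ) * cexp (z * x)
      = cexp (-z * Real.log μ) * Complex.Gamma z := by
  simp only [cexp_neg_mul_exp_mul_cexp_eq hμ]
  rw [integral_const_mul, integral_add_right_eq_self
    (fun x : ℝ ↦ cexp (-(Real.exp x) : ℝ) * cexp (z * x)), integral_cexp_neg_exp_mul_cexp hz]

theorem tendsto_integral_mul_of_norm_le_one {α ι A : Type*} [MeasurableSpace α] {ν : Measure α}
    {l : Filter ι} [l.IsCountablyGenerated] [NormedRing A] [NormedAlgebra ℝ A] [CompleteSpace A]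
    {f : α → A} {g : ι → α → A} (hf : Integrable f ν)
    (hg_meas : ∀ᶠ i in l, AEStronglyMeasurable (g i) ν)
    (hg_le : ∀ᶠ i in l, ∀ᵐ x ∂ν, ‖g i x‖ ≤ 1)
    (hg_lim : ∀ᵐ x ∂ν, Tendsto (fun i ↦ g i x) l (𝓝 1)) :
    Tendsto (fun i ↦ ∫ x, f x * g i x ∂ν) l (𝓝 (∫ x, f x ∂ν)) := by
  refine tendsto_integral_filter_of_dominated_convergence (fun x ↦ ‖f x‖) ?_ ?_ hf.norm ?_
  · filter_upwards [hg_meas] with i hgi using hf.aestronglyMeasurable.mul hgi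
  · filter_upwards [hg_le] with i hgi
    filter_upwards [hgi] with x hx
    calc ‖f x * g i x‖ ≤ ‖f x‖ * ‖g i x‖ := norm_mul_le _ _
      _ ≤ ‖f x‖ := mul_le_of_le_one_right (norm_nonneg _) hx
  · filter_upwards [hg_lim] with x hx
    simpa using hx.const_mul (f x)

theorem tendsto_cexp_neg_sq_div_atTop (x : ℝ) :
    Tendsto (fun t : ℝ ↦ cexp (-(x ^ 2 / (2 * t)) : ℝ)) atTop (𝓝 1) := by
  have h : Tendsto (fun t : ℝ ↦ -(x ^ 2 / (2 * t))) atTop (𝓝 0) := by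
    simpa using (tendsto_const_nhds (x := x ^ 2)).div_atTop
      (tendsto_id.const_mul_atTop (two_pos : (0 : ℝ) < 2)) |>.neg
  simpa [Function.comp_def] using
    (Complex.continuous_exp.comp Complex.continuous_ofReal).tendsto 0 |>.comp h

theorem norm_cexp_neg_sq_div_le_one (x : ℝ) {t : ℝ} (ht : 0 ≤ t) :
    ‖cexp (-(x ^ 2 / (2 * t)) : ℝ)‖ ≤ 1 := by
  rw [Complex.norm_exp_ofReal, Real.exp_le_one_iff, neg_nonpos]
  positivity

/-- For every `μ > 0` and every `z ∈ ℂ` with `Re z > 0`, the regularized Gamma function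
converges to a multiple of the Gamma function as `t → ∞`:
`lim_{t→∞} Γ_{μ,t}(z) = μ^{-z} Γ(z)`, where `μ^{-z} = e^{-z log μ}` with the real
logarithm of `μ`. -/
theorem regGamma_tendsto_gamma (μ : ℝ) (hμ : 0 < μ) (z : ℂ) (hz : 0 < z.re) :
    Tendsto (fun t : ℝ => regGamma μ t z) atTop
      (nhds (Complex.exp (-z * (Real.log μ : ℂ)) * Complex.Gamma z)) := by
  rw [← integral_cexp_neg_mul_exp_mul_cexp hμ hz]
  refine tendsto_integral_mul_of_norm_le_one (integrable_cexp_neg_mul_exp_mul_cexp hμ hz)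
    (.of_forall fun t ↦ by fun_prop) ?_ (.of_forall tendsto_cexp_neg_sq_div_atTop)
  filter_upwards [eventually_ge_atTop 0] with t ht
  exact .of_forall fun x ↦ norm_cexp_neg_sq_div_le_one x ht
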